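/- arXiv:2412.18368 — 6 statements merged into one kernel-verified Lean document; each statement's English description precedes it below -/
import Mathlib

section
/- For every nonnegative integer n, the n-th complete homogeneous symmetric function evaluated at (1/1², 1/2², 1/3², …) equals (-1)^n · π^{2n}/(2n)! · (2 - 2^{2n}) · B_{2n}; that is, ∑_{1 ≤ i₁ ≤ i₂ ≤ ⋯ ≤ iₙ} 1/(i₁² i₂² ⋯ iₙ²) = (-1)^n π^{2n} (2 - 2^{2n}) B_{2n} / (2n)!. -/
/-!
Write `T(n, m) = h_n(1, 1/2², …, 1/m²)`. Sorting the tuples by whether their largest entry is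
`m + 1` gives `T(n+1, m+1) = T(n+1, m) + T(n, m+1) / (m+1)²`. The partial-fraction value
`R(m, n) = 2 ∑_{k=1}^m (-1)^(k+1) c(m, k) / k^(2n)` with `c(m, k) = m!² / ((m-k)! (m+k)!)`
satisfies the same recursion and the same boundary values (`R(m, 0) = 1` is the vanishing of the
alternating sum of the row `2m` of Pascal's triangle), so `T = R`. Since `0 ≤ c(m, k) ≤ 1` and
`c(m, k) → 1`, Tannery's theorem gives `R(m, n) → 2 ∑_k (-1)^(k+1) / k^(2n)`, and this alternating
zeta value is the Fourier series of the Bernoulli polynomial `B_{2n}` at `1/2`, where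
`B_{2n}(1/2) = (2^(1-2n) - 1) B_{2n}`.
-/

open Real Filter Finset
open scoped Topology Nat

noncomputable section

namespace HsymmInvSquares

lemma monotone_snoc_iff {α : Type*} [Preorder α] {n : ℕ} {g : Fin n → α} {a : α} :
    Monotone (Fin.snoc g a : Fin (n + 1) → α) ↔ Monotone g ∧ ∀ i, g i ≤ a := by
  constructor
  · intro h
    refine ⟨fun i j hij => ?_, fun i => ?_⟩
    · simpa using h (Fin.castSucc_le_castSucc_iff.mpr hij)
    · simpa using h (Fin.castSucc_lt_last i).le
  · rintro ⟨hg, ha⟩ i j hij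
    induction j using Fin.lastCases with
    | last => induction i using Fin.lastCases <;> simp [ha]
    | cast j =>
      induction i using Fin.lastCases with
      | last => exact absurd hij (Fin.castSucc_lt_last j).not_ge
      | cast i => simpa using hg (Fin.castSucc_le_castSucc_iff.mp hij)

def monotoneTuplesLE (n m : ℕ) : Finset (Fin n → ℕ+) :=
  (Fintype.piFinset fun _ => Iio m.succPNat).filter Monotone

lemma mem_monotoneTuplesLE {n m : ℕ} {f : Fin n → ℕ+} :
    f ∈ monotoneTuplesLE n m ↔ Monotone f ∧ ∀ k, (f k : ℕ) ≤ m := by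
  simp only [monotoneTuplesLE, mem_filter, Fintype.mem_piFinset, mem_Iio, ← PNat.coe_lt_coe,
    Nat.succPNat_coe, Nat.lt_succ_iff, and_comm]

lemma monotoneTuplesLE_zero_left (m : ℕ) : monotoneTuplesLE 0 m = {Fin.elim0} := by
  ext f
  simp [mem_monotoneTuplesLE, Subsingleton.elim f Fin.elim0, Subsingleton.monotone]

lemma monotoneTuplesLE_succ_zero (n : ℕ) : monotoneTuplesLE (n + 1) 0 = ∅ := by
  ext f
  simp [mem_monotoneTuplesLE]

lemma filter_last_le_monotoneTuplesLE (n m : ℕ) :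
    (monotoneTuplesLE (n + 1) (m + 1)).filter (fun f => (f (Fin.last n) : ℕ) ≤ m) =
      monotoneTuplesLE (n + 1) m := by
  ext f
  simp only [mem_filter, mem_monotoneTuplesLE]
  constructor
  · rintro ⟨⟨hf, -⟩, hlast⟩
    exact ⟨hf, fun k => (PNat.coe_le_coe _ _).mpr (hf (Fin.le_last k)) |>.trans hlast⟩
  · rintro ⟨hf, hle⟩
    exact ⟨⟨hf, fun k => (hle k).trans m.le_succ⟩, hle _⟩

lemma filter_last_not_le_monotoneTuplesLE (n m : ℕ) :
    (monotoneTuplesLE (n + 1) (m + 1)).filter (fun f => ¬ (f (Fin.last n) : ℕ) ≤ m) =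
      (monotoneTuplesLE n (m + 1)).image (Fin.snoc · m.succPNat) := by
  ext f
  obtain ⟨g, a, rfl⟩ : ∃ g a, f = Fin.snoc g a := ⟨Fin.init f, _, (Fin.snoc_init_self f).symm⟩
  simp only [mem_filter, mem_image, mem_monotoneTuplesLE, monotone_snoc_iff,
    Fin.forall_fin_succ', Fin.snoc_castSucc, Fin.snoc_last, Fin.snoc_injective2.eq_iff]
  constructor
  · rintro ⟨⟨⟨hg, -⟩, hgb, ha⟩, ha'⟩
    exact ⟨g, ⟨hg, hgb⟩, rfl, PNat.eq (by simp only [Nat.succPNat_coe]; omega)⟩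
  · rintro ⟨_, ⟨hg, hgb⟩, rfl, rfl⟩
    exact ⟨⟨⟨hg, fun i => (PNat.coe_le_coe _ _).mp (hgb i)⟩, hgb, le_rfl⟩, by simp⟩

/-- `hsymmTrunc x n m = h_n(x 1, …, x m)`. -/
def hsymmTrunc (x : ℕ → ℝ) (n m : ℕ) : ℝ := ∑ f ∈ monotoneTuplesLE n m, ∏ k, x (f k)

lemma hsymmTrunc_zero_left (x : ℕ → ℝ) (m : ℕ) : hsymmTrunc x 0 m = 1 := by
  simp [hsymmTrunc, monotoneTuplesLE_zero_left]

lemma hsymmTrunc_succ_zero (x : ℕ → ℝ) (n : ℕ) : hsymmTrunc x (n + 1) 0 = 0 := by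
  simp [hsymmTrunc, monotoneTuplesLE_succ_zero]

lemma hsymmTrunc_succ_succ (x : ℕ → ℝ) (n m : ℕ) :
    hsymmTrunc x (n + 1) (m + 1) =
      hsymmTrunc x (n + 1) m + x (m + 1) * hsymmTrunc x n (m + 1) := by
  rw [hsymmTrunc, ← sum_filter_add_sum_filter_not _ (fun f => (f (Fin.last n) : ℕ) ≤ m),
    filter_last_le_monotoneTuplesLE, filter_last_not_le_monotoneTuplesLE,
    sum_image fun g _ g' _ h => (Fin.snoc_injective2 h).1, hsymmTrunc, hsymmTrunc, mul_sum]
  congr 1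
  refine sum_congr rfl fun g _ => ?_
  simp [Fin.prod_univ_castSucc, mul_comm]

lemma summable_prod_apply_of_nonneg {ι κ : Type*} [Fintype κ] {y : ι → ℝ} (hy0 : ∀ i, 0 ≤ y i)
    (hy : Summable y) : Summable fun f : κ → ι => ∏ k, y (f k) := by
  classical
  refine summable_of_sum_le (c := (∑' i, y i) ^ Fintype.card κ)
    (fun f => prod_nonneg fun k _ => hy0 _) fun s => ?_
  set t : Finset ι := s.biUnion fun f => univ.image f
  calc ∑ f ∈ s, ∏ k, y (f k)
      ≤ ∑ f ∈ Fintype.piFinset fun _ => t, ∏ k, y (f k) :=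
        sum_le_sum_of_subset_of_nonneg
          (fun f hf => Fintype.mem_piFinset.mpr fun k => mem_biUnion.mpr ⟨f, hf, by simp⟩)
          (fun f _ _ => prod_nonneg fun k _ => hy0 _)
    _ = (∑ i ∈ t, y i) ^ Fintype.card κ := by rw [← prod_univ_sum, prod_const, card_univ]
    _ ≤ (∑' i, y i) ^ Fintype.card κ :=
        pow_le_pow_left₀ (sum_nonneg fun i _ => hy0 i) (hy.sum_le_tsum t fun i _ => hy0 i) _

lemma tendsto_hsymmTrunc {x : ℕ → ℝ} (hx0 : ∀ j, 0 ≤ x j) (hx : Summable x) (n : ℕ) :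
    Tendsto (hsymmTrunc x n) atTop
      (𝓝 (∑' f : {f : Fin n → ℕ+ // Monotone f}, ∏ k, x (f.1 k))) := by
  have hsum : Summable fun f : {f : Fin n → ℕ+ // Monotone f} => ∏ k, x (f.1 k) :=
    (summable_prod_apply_of_nonneg (fun j : ℕ+ => hx0 j)
      (hx.comp_injective PNat.coe_injective)).comp_injective Subtype.val_injective
  have hmono : Monotone fun m => (monotoneTuplesLE n m).subtype Monotone := by
    intro m m' hm f
    simp only [mem_subtype, mem_monotoneTuplesLE]
    exact fun ⟨hf, hle⟩ => ⟨hf, fun k => (hle k).trans hm⟩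
  have hcover (f : {f : Fin n → ℕ+ // Monotone f}) :
      ∃ m, f ∈ (monotoneTuplesLE n m).subtype Monotone :=
    ⟨univ.sup fun k => (f.1 k : ℕ), mem_subtype.mpr <| mem_monotoneTuplesLE.mpr
      ⟨f.2, fun k => le_sup (f := fun k => (f.1 k : ℕ)) (mem_univ k)⟩⟩
  refine (hsum.hasSum.comp (tendsto_atTop_finset_of_monotone hmono hcover)).congr fun m => ?_
  exact sum_subtype_of_mem (fun f => ∏ k, x (f k)) fun f hf => (mem_monotoneTuplesLE.mp hf).1

def binomRatio (m k : ℕ) : ℝ := (m ! : ℝ) ^ 2 / ((m - k)! * (m + k)!)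

lemma binomRatio_nonneg (m k : ℕ) : 0 ≤ binomRatio m k := by
  unfold binomRatio; positivity

lemma binomRatio_zero_right (m : ℕ) : binomRatio m 0 = 1 := by
  simp [binomRatio, sq, Nat.factorial_ne_zero]

lemma binomRatio_succ_right {m k : ℕ} (hk : k < m) :
    binomRatio m (k + 1) = binomRatio m k * ((m - k) / (m + k + 1)) := by
  obtain ⟨a, rfl⟩ := Nat.exists_eq_add_of_lt hk
  rw [binomRatio, binomRatio, show k + a + 1 - (k + 1) = a by omega,
    show k + a + 1 - k = a + 1 by omega, show k + a + 1 + (k + 1) = k + a + 1 + k + 1 by omega,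
    Nat.factorial_succ a, Nat.factorial_succ (k + a + 1 + k)]
  push_cast
  field_simp
  ring

lemma binomRatio_succ_left {m k : ℕ} (hk : k ≤ m) :
    binomRatio (m + 1) k * ((m + 1) ^ 2 - k ^ 2) = binomRatio m k * (m + 1) ^ 2 := by
  obtain ⟨a, rfl⟩ := Nat.exists_eq_add_of_le hk
  rw [binomRatio, binomRatio, show k + a + 1 - k = a + 1 by omega, show k + a - k = a by omega,
    show k + a + 1 + k = k + a + k + 1 by omega, Nat.factorial_succ a,
    Nat.factorial_succ (k + a), Nat.factorial_succ (k + a + k)]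
  push_cast
  field_simp
  ring

lemma binomRatio_le_one {m k : ℕ} (hk : k ≤ m) : binomRatio m k ≤ 1 := by
  induction k with
  | zero => rw [binomRatio_zero_right]
  | succ k ih =>
    rw [binomRatio_succ_right hk]
    refine mul_le_one₀ (ih (by omega)) (div_nonneg ?_ ?_) ((div_le_one₀ ?_).mpr ?_)
    have hkm : (k : ℝ) + 1 ≤ m := by exact_mod_cast hk
    all_goals linarith

lemma tendsto_binomRatio (k : ℕ) : Tendsto (binomRatio · k) atTop (𝓝 1) := by
  induction k with
  | zero => simp [binomRatio_zero_right]
  | succ k ih =>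
    have hratio : Tendsto (fun m : ℕ => ((m : ℝ) - k) / (m + k + 1)) atTop (𝓝 1) := by
      have h := ((tendsto_const_nhds (x := (1 : ℝ))).sub
        (tendsto_const_div_atTop_nhds_zero_nat (k : ℝ))).div
        ((tendsto_const_nhds (x := (1 : ℝ))).add
          (tendsto_const_div_atTop_nhds_zero_nat ((k : ℝ) + 1))) (by norm_num)
      rw [sub_zero, add_zero, div_one] at h
      refine h.congr' ((eventually_ne_atTop 0).mono fun m hm => ?_)
      simp only [Pi.div_apply]
      field_simp
      ring
    simpa using (ih.mul hratio).congr' ((eventually_gt_atTop k).mono fun m hm =>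
      (binomRatio_succ_right hm).symm)

lemma binomRatio_eq_choose_div {m k : ℕ} (hk : k ≤ m) :
    binomRatio m k = ((2 * m).choose (m + k) : ℝ) / (2 * m).choose m := by
  rw [Nat.cast_choose ℝ (by omega : m + k ≤ 2 * m), Nat.cast_choose ℝ (by omega : m ≤ 2 * m),
    show 2 * m - (m + k) = m - k by omega, show 2 * m - m = m by omega, binomRatio]
  field_simp

lemma two_mul_sum_Icc_neg_one_pow_choose {m : ℕ} (hm : m ≠ 0) :
    2 * ∑ k ∈ Icc 1 m, (-1 : ℤ) ^ (k + 1) * (2 * m).choose (m + k) = (2 * m).choose m := by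
  obtain ⟨p, rfl⟩ := Nat.exists_eq_add_one_of_ne_zero hm
  have hupper : ∑ k ∈ Icc 1 (p + 1), (-1 : ℤ) ^ (k + 1) * (2 * (p + 1)).choose (p + 1 + k) =
      (-1 : ℤ) ^ p * ∑ j ∈ range (p + 1), (-1 : ℤ) ^ j * ((2 * p + 1 + 1).choose j : ℤ) := by
    rw [← Finset.Ico_add_one_right_eq_Icc, sum_Ico_eq_sum_range, Nat.add_sub_cancel,
      ← sum_range_reflect (fun j => (-1 : ℤ) ^ j * ((2 * p + 1 + 1).choose j : ℤ)), mul_sum]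
    refine sum_congr rfl fun j hj => ?_
    obtain ⟨i, rfl⟩ : ∃ i, p = j + i := ⟨p - j, by have := mem_range.mp hj; omega⟩
    have hsign : (-1 : ℤ) ^ (j + i) * (-1) ^ i = (-1) ^ (1 + j + 1) := by
      rw [pow_add, mul_assoc, ← pow_add, ← two_mul, pow_mul]; norm_num [pow_add]
    rw [show j + i + 1 - 1 - j = i by omega,
      show 2 * (j + i + 1) = j + i + 1 + (1 + j) + i by ring,
      show 2 * (j + i) + 1 + 1 = j + i + 1 + (1 + j) + i by ring, Nat.choose_symm_add,
      ← mul_assoc, hsign]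
  have hsq : ((-1 : ℤ) ^ p) ^ 2 = 1 := by rw [← pow_mul, pow_mul', neg_one_sq, one_pow]
  rw [hupper, Int.alternating_sum_range_choose_eq_choose,
    show 2 * (p + 1) = 2 * p + 1 + 1 by ring, Nat.choose_succ_succ, ← Nat.choose_symm_half]
  push_cast
  linear_combination (2 * ((2 * p + 1).choose (p + 1) : ℤ)) * hsq

def closedForm (m n : ℕ) : ℝ :=
  2 * ∑ k ∈ Icc 1 m, (-1) ^ (k + 1) * binomRatio m k / (k : ℝ) ^ (2 * n)

lemma closedForm_zero_right {m : ℕ} (hm : m ≠ 0) : closedForm m 0 = 1 := by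
  have hc : ((2 * m).choose m : ℝ) ≠ 0 := Nat.cast_ne_zero.mpr (Nat.choose_pos (by omega)).ne'
  have h := congrArg (Int.cast : ℤ → ℝ) (two_mul_sum_Icc_neg_one_pow_choose hm)
  push_cast at h
  simp only [closedForm, mul_zero, pow_zero, div_one]
  rw [sum_congr rfl fun k hk => by
      rw [binomRatio_eq_choose_div (mem_Icc.mp hk).2, mul_div_assoc'],
    ← sum_div, ← mul_div_assoc, h, div_self hc]

lemma closedForm_succ_succ (m n : ℕ) :
    closedForm (m + 1) (n + 1) =
      closedForm m (n + 1) + 1 / ((m + 1 : ℕ) : ℝ) ^ 2 * closedForm (m + 1) n := by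
  have hterm : ∀ k ∈ Icc 1 m, (-1 : ℝ) ^ (k + 1) * binomRatio m k / (k : ℝ) ^ (2 * (n + 1)) =
      (-1) ^ (k + 1) * binomRatio (m + 1) k / (k : ℝ) ^ (2 * (n + 1)) -
        1 / ((m + 1 : ℕ) : ℝ) ^ 2 *
          ((-1) ^ (k + 1) * binomRatio (m + 1) k / (k : ℝ) ^ (2 * n)) := by
    intro k hk
    obtain ⟨hk1, hkm⟩ := mem_Icc.mp hk
    have hk0 : (k : ℝ) ≠ 0 := Nat.cast_ne_zero.mpr (by omega)
    have h := binomRatio_succ_left hkm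
    push_cast
    field_simp
    linear_combination -(k : ℝ) ^ (2 * n) * h
  rw [closedForm, closedForm, closedForm, sum_Icc_succ_top (by omega),
    sum_Icc_succ_top (by omega), sum_congr rfl hterm, sum_sub_distrib, ← mul_sum]
  push_cast
  field_simp
  ring

lemma hasSum_neg_one_pow_div_pow {n : ℕ} (hn : n ≠ 0) :
    HasSum (fun k : ℕ => (-1 : ℝ) ^ k / (k : ℝ) ^ (2 * n))
      ((-1) ^ (n + 1) * (2 * π) ^ (2 * n) / 2 / (2 * n)! *
        ((2 / 2 ^ (2 * n) - 1) * bernoulli (2 * n))) := by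
  have h := hasSum_one_div_nat_pow_mul_cos hn (x := 2⁻¹) ⟨by norm_num, by norm_num⟩
  rw [show (Polynomial.map (algebraMap ℚ ℝ) (Polynomial.bernoulli (2 * n))).eval 2⁻¹ =
    (2 / 2 ^ (2 * n) - 1) * bernoulli (2 * n) from bernoulliFun_eval_half _] at h
  convert h using 2 with k
  rw [show 2 * π * k * 2⁻¹ = k * π by ring, cos_nat_mul_pi]
  ring

lemma tendsto_closedForm {n : ℕ} (hn : n ≠ 0) :
    Tendsto (closedForm · n) atTop (𝓝 (2 * ∑' k : ℕ, (-1) ^ (k + 1) / (k : ℝ) ^ (2 * n))) := by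
  set F : ℕ → ℕ → ℝ := fun m =>
    (Icc 1 m : Set ℕ).indicator fun k => (-1) ^ (k + 1) * binomRatio m k / (k : ℝ) ^ (2 * n)
  have hF (m : ℕ) : closedForm m n = 2 * ∑' k, F m k := by
    rw [closedForm, sum_eq_tsum_indicator]
  have hlim (k : ℕ) : Tendsto (F · k) atTop (𝓝 ((-1) ^ (k + 1) / (k : ℝ) ^ (2 * n))) := by
    rcases k.eq_zero_or_pos with rfl | hk
    · simp [F, hn]
    · have h := ((tendsto_binomRatio k).const_mul ((-1 : ℝ) ^ (k + 1))).div_const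
        ((k : ℝ) ^ (2 * n))
      rw [mul_one] at h
      refine h.congr' ((eventually_ge_atTop k).mono fun m hm => ?_)
      dsimp only [F]
      rw [Set.indicator_of_mem (mem_coe.mpr (mem_Icc.mpr ⟨hk, hm⟩))]
  have hbound (m k : ℕ) : ‖F m k‖ ≤ 1 / (k : ℝ) ^ (2 * n) := by
    dsimp only [F]
    by_cases hk : k ∈ Icc 1 m
    · rw [Set.indicator_of_mem (mem_coe.mpr hk), norm_div, norm_mul, norm_pow, norm_neg,
        norm_one, one_pow, one_mul, Real.norm_of_nonneg (binomRatio_nonneg m k), norm_pow,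
        Real.norm_natCast]
      exact div_le_div_of_nonneg_right (binomRatio_le_one (mem_Icc.mp hk).2) (by positivity)
    · rw [Set.indicator_of_notMem (mem_coe.not.mpr hk), norm_zero]
      positivity
  simpa only [hF] using (tendsto_tsum_of_dominated_convergence
    (Real.summable_one_div_nat_pow.mpr (by omega)) hlim (Eventually.of_forall hbound)).const_mul 2

lemma hsymmTrunc_inv_sq_eq_closedForm (m n : ℕ) :
    hsymmTrunc (fun j : ℕ => 1 / (j : ℝ) ^ 2) (n + 1) m = closedForm m (n + 1) := by
  induction m generalizing n with
  | zero => simp [hsymmTrunc_succ_zero, closedForm]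
  | succ m ihm =>
    induction n with
    | zero =>
      rw [hsymmTrunc_succ_succ, ihm, hsymmTrunc_zero_left, closedForm_succ_succ,
        closedForm_zero_right m.succ_ne_zero]
    | succ n ihn => rw [hsymmTrunc_succ_succ, ihm, ihn, closedForm_succ_succ m (n + 1)]

end HsymmInvSquares

end

open HsymmInvSquares in
/-- The `n`-th complete homogeneous symmetric function of `(1/1², 1/2², …)`, as a sum over
weakly increasing `n`-tuples of positive integers. -/
theorem hsymm_inv_squares (n : ℕ) :
    (∑' f : {f : Fin n → ℕ+ // Monotone f}, ∏ k : Fin n, (1 : ℝ) / ((f.1 k : ℕ) : ℝ) ^ 2)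
      = (-1 : ℝ) ^ n * π ^ (2 * n) / (Nat.factorial (2 * n) : ℝ) * (2 - 2 ^ (2 * n)) *
          ((bernoulli (2 * n) : ℚ) : ℝ) := by
  have hlim := tendsto_hsymmTrunc (x := fun j : ℕ => 1 / (j : ℝ) ^ 2) (fun j => by positivity)
    (Real.summable_one_div_nat_pow.mpr one_lt_two) n
  rcases n with _ | n
  · have hT0 : Tendsto (hsymmTrunc (fun j : ℕ => 1 / (j : ℝ) ^ 2) 0) atTop (𝓝 1) :=
      tendsto_const_nhds.congr fun m => (hsymmTrunc_zero_left _ m).symm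
    refine (tendsto_nhds_unique hlim hT0).trans ?_
    norm_num
  · have hR := (tendsto_closedForm (Nat.add_one_ne_zero n)).congr fun m =>
      (hsymmTrunc_inv_sq_eq_closedForm m n).symm
    refine (tendsto_nhds_unique hlim hR).trans ?_
    simp_rw [pow_succ (-1 : ℝ), mul_neg_one, neg_div]
    rw [tsum_neg, (hasSum_neg_one_pow_div_pow (Nat.add_one_ne_zero n)).tsum_eq]
    field_simp
    ring
end

section
/- For every positive integer n, B_{2n} · 2^{2n-1} = ∑_{j=0}^{n} C(2n, 2j-1) · B_{2j} · (2^{2j-1} - 1), where C(2n, 2j-1) is the binomial coefficient (taken to be 0 when 2j-1 < 0 or 2j-1 > 2n). -/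
/-!
Write `S(a) = ∑_{k ≤ N} C(N,k) a^k B_k`. Then `S(1) = B_N` for `N ≠ 1`, and
`S(2) = 2^N B_N(1/2) = (2 - 2^N) B_N`. Pascal's rule `C(N+1,k) = C(N,k) + C(N,k-1)` expresses
`∑_{m ≤ N} C(N,m) a^(m+1) B_(m+1)` as the difference of these sums at `N + 1` and `N`, which yields
`∑_{m ≤ N} C(N,m) B_(m+1) (2^m - 1)` in closed form. For `N = 2n` the odd Bernoulli numbers vanish,
so only the odd indices `m = 2j - 1` contribute.
-/

open Finset

theorem sum_range_choose_mul_bernoulli {N : ℕ} (hN : N ≠ 1) :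
    ∑ k ∈ range (N + 1), (N.choose k : ℚ) * bernoulli k = bernoulli N := by
  simp [sum_range_succ, hN]

theorem sum_range_choose_mul_two_pow_mul_bernoulli (N : ℕ) :
    ∑ k ∈ range (N + 1), (N.choose k : ℚ) * (2 ^ k * bernoulli k) = (2 - 2 ^ N) * bernoulli N := by
  -- the left-hand side is `2^N B_N(1/2)`
  have h := bernoulliFun_eval_half N
  simp only [bernoulliFun, Polynomial.bernoulli, Polynomial.map_sum, Polynomial.map_monomial,
    Polynomial.eval_finsetSum, Polynomial.eval_monomial, eq_ratCast] at h
  apply Rat.cast_injective (α := ℝ)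
  push_cast at h ⊢
  calc _ = 2 ^ N * ∑ k ∈ range (N + 1), (bernoulli k * N.choose k : ℝ) * 2⁻¹ ^ (N - k) := by
        rw [mul_sum]
        refine sum_congr rfl fun k hk => ?_
        obtain ⟨j, rfl⟩ := Nat.exists_eq_add_of_le (mem_range_succ_iff.mp hk)
        rw [Nat.add_sub_cancel_left, pow_add, inv_pow]
        field_simp
    _ = _ := by rw [h]; field_simp

theorem two_mul_sum_range_choose_mul_bernoulli_succ_mul_two_pow_sub_one {N : ℕ} (hN : 2 ≤ N) :
    2 * ∑ m ∈ range (N + 1), (N.choose m : ℚ) * bernoulli (m + 1) * (2 ^ m - 1) =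
      2 ^ N * bernoulli N - 2 ^ (N + 1) * bernoulli (N + 1) := by
  have hweighted := sum_choose_succ_mul (fun k _ => (2 : ℚ) ^ k * bernoulli k) N
  have hplain := sum_choose_succ_mul (fun k _ => bernoulli k) N
  rw [show N + 2 = N + 1 + 1 from rfl, sum_range_choose_mul_two_pow_mul_bernoulli,
    sum_range_choose_mul_two_pow_mul_bernoulli] at hweighted
  rw [show N + 2 = N + 1 + 1 from rfl, sum_range_choose_mul_bernoulli (by omega),
    sum_range_choose_mul_bernoulli (by omega)] at hplain
  calc _ = ∑ m ∈ range (N + 1), (N.choose m : ℚ) * (2 ^ (m + 1) * bernoulli (m + 1))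
        - 2 * ∑ m ∈ range (N + 1), (N.choose m : ℚ) * bernoulli (m + 1) := by
        rw [mul_sum, mul_sum, ← sum_sub_distrib]
        exact sum_congr rfl fun m _ => by ring
    _ = _ := by linear_combination 2 * hplain - hweighted

theorem sum_range_two_mul_add_one_eq_sum_Icc_of_even_eq_zero {M : Type*} [AddCommMonoid M]
    {f : ℕ → M} (hf : ∀ i, f (2 * i) = 0) (n : ℕ) :
    ∑ m ∈ range (2 * n + 1), f m = ∑ j ∈ Icc 1 n, f (2 * j - 1) := by
  induction n with
  | zero => simp [hf 0]
  | succ n ih =>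
    rw [sum_Icc_succ_top (by omega), ← ih, show 2 * (n + 1) + 1 = 2 * n + 1 + 1 + 1 from rfl,
      sum_range_succ, sum_range_succ, show 2 * n + 1 + 1 = 2 * (n + 1) from rfl, hf,
      show 2 * (n + 1) - 1 = 2 * n + 1 from rfl, add_zero]

theorem bernoulli_recurrence_reverse (n : ℕ) (hn : 0 < n) :
    (bernoulli (2 * n)) * 2 ^ (2 * n - 1) =
      ∑ j ∈ Finset.Icc 1 n,
        ((Nat.choose (2 * n) (2 * j - 1) : ℚ)) * bernoulli (2 * j) * (2 ^ (2 * j - 1) - 1) := by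
  have hodd {i : ℕ} (hi : 0 < i) : bernoulli (2 * i + 1) = 0 :=
    bernoulli_eq_zero_of_odd (odd_two_mul_add_one i) (by omega)
  have heven (i : ℕ) :
      ((2 * n).choose (2 * i) : ℚ) * bernoulli (2 * i + 1) * (2 ^ (2 * i) - 1) = 0 := by
    rcases i.eq_zero_or_pos with rfl | hi
    · simp
    · simp [hodd hi]
  have hsum :=
    two_mul_sum_range_choose_mul_bernoulli_succ_mul_two_pow_sub_one (N := 2 * n) (by omega)
  rw [sum_range_two_mul_add_one_eq_sum_Icc_of_even_eq_zero heven, hodd hn] at hsum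
  have hshift : ∀ j ∈ Icc 1 n, 2 * j - 1 + 1 = 2 * j := fun j hj => by
    rw [mem_Icc] at hj; omega
  rw [sum_congr rfl fun j hj => by rw [hshift j hj]] at hsum
  have hpow : (2 : ℚ) ^ (2 * n) = 2 * 2 ^ (2 * n - 1) := by
    rw [← pow_succ', Nat.sub_add_cancel (by omega)]
  linear_combination -(hsum + bernoulli (2 * n) * hpow) / 2
end

section
/- For every positive integer n, 2n + 1 = ∑_{j=0}^{n} C(2n+1, 2j) · B_{2j} · 2^{2j} (Ramanujan's Bernoulli number identity). -/
/-!
Since `B_m(x) = ∑ₖ C(m,k) B_k x^(m-k)`, the sum `∑ₖ C(m,k) B_k 2^k` over all `k ≤ m` equals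
`2^m B_m(1/2)`, which vanishes for odd `m` by the symmetry `B_m(1 - x) = (-1)^m B_m(x)`.
For `m = 2n + 1` the only nonzero odd-index term is `C(m,1) B_1 2 = -m`, so the even-index terms
sum to `m`.
-/

open Finset

theorem Finset.sum_range_two_mul {M : Type*} [AddCommMonoid M] (f : ℕ → M) (n : ℕ) :
    ∑ k ∈ range (2 * n), f k = ∑ j ∈ range n, f (2 * j) + ∑ j ∈ range n, f (2 * j + 1) := by
  induction n with
  | zero => simp
  | succ n ih =>
    rw [Nat.mul_succ, sum_range_succ, sum_range_succ, sum_range_succ, sum_range_succ, ih]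
    abel

namespace Polynomial

theorem bernoulli_eval_one_half_of_odd {m : ℕ} (hm : Odd m) : (bernoulli m).eval (1 / 2) = 0 := by
  have h := bernoulli_eval_one_sub m (1 / 2)
  rw [hm.neg_one_pow] at h
  norm_num at h
  linarith

theorem two_pow_mul_bernoulli_eval_one_half (m : ℕ) :
    2 ^ m * (bernoulli m).eval (1 / 2) =
      ∑ k ∈ range (m + 1), (m.choose k : ℚ) * _root_.bernoulli k * 2 ^ k := by
  simp only [bernoulli, eval_finsetSum, eval_monomial, mul_sum]
  refine sum_congr rfl fun k hk => ?_
  have hkm : k ≤ m := Nat.lt_succ_iff.mp (mem_range.mp hk)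
  have h2 : (2 : ℚ) ^ m * (1 / 2) ^ (m - k) = 2 ^ k := by
    rw [← Nat.sub_add_cancel hkm, pow_add, one_div_pow, Nat.add_sub_cancel]
    field_simp
  linear_combination (_root_.bernoulli k * m.choose k) * h2

end Polynomial

theorem sum_choose_mul_bernoulli_mul_two_pow_of_odd {m : ℕ} (hm : Odd m) :
    ∑ k ∈ range (m + 1), (m.choose k : ℚ) * bernoulli k * 2 ^ k = 0 := by
  rw [← Polynomial.two_pow_mul_bernoulli_eval_one_half,
    Polynomial.bernoulli_eval_one_half_of_odd hm, mul_zero]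

theorem sum_range_mul_bernoulli_two_mul_add_one (a b : ℕ → ℚ) {n : ℕ} (hn : 0 < n) :
    ∑ j ∈ range n, a (2 * j + 1) * bernoulli (2 * j + 1) * b (2 * j + 1) =
      -(a 1 * b 1) / 2 := by
  rw [sum_eq_single_of_mem 0 (mem_range.mpr hn)]
  · simp only [mul_zero, zero_add, bernoulli_one]
    ring
  · intro j _ hj
    rw [bernoulli_eq_zero_of_odd (odd_two_mul_add_one j) (by omega), mul_zero, zero_mul]

theorem ramanujan_bernoulli_general (n : ℕ) :
    (2 * n + 1 : ℚ) =
      ∑ j ∈ Finset.range (n + 1),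
        ((Nat.choose (2 * n + 1) (2 * j) : ℚ)) * bernoulli (2 * j) * 2 ^ (2 * j) := by
  have hsum := sum_choose_mul_bernoulli_mul_two_pow_of_odd (odd_two_mul_add_one n)
  rw [show 2 * n + 1 + 1 = 2 * (n + 1) by ring, sum_range_two_mul,
    sum_range_mul_bernoulli_two_mul_add_one (fun k => ((2 * n + 1).choose k : ℚ))
      (fun k => (2 : ℚ) ^ k) n.succ_pos] at hsum
  simp only [Nat.choose_one_right, pow_one] at hsum
  push_cast at hsum
  linarith

theorem ramanujan_bernoulli (n : ℕ) (hn : 0 < n) :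
    (2 * n + 1 : ℚ) =
      ∑ j ∈ Finset.range (n + 1),
        ((Nat.choose (2 * n + 1) (2 * j) : ℚ)) * bernoulli (2 * j) * 2 ^ (2 * j) :=
  ramanujan_bernoulli_general n
end

section
/- For every integer n ≥ 2, ∑_{j=1}^{n-1} C(2n, 2j) · B_{2j} · B_{2n-2j} = -(2n+1) · B_{2n} (Euler's convolution identity for Bernoulli numbers). -/
/-!
The generating function `B(X) = X / (eˣ - 1)` satisfies `B² = (1 - X) B - X B'`. Comparing the
coefficients of `X ^ m / m!` gives `∑ₖ C(m, k) B_k B_{m-k} = (1 - m) B_m - m B_{m-1}`. For `m = 2n`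
the odd-index terms and `B_{2n-1}` vanish, and the two end terms `k = 0, 2n` contribute `2 B_{2n}`.
-/

open PowerSeries Finset Nat

theorem bernoulliPowerSeries_mul_self (A : Type*) [CommRing A] [IsDomain A] [Algebra ℚ A] :
    bernoulliPowerSeries A * bernoulliPowerSeries A
      = (1 - X) * bernoulliPowerSeries A - X * d⁄dX A (bernoulliPowerSeries A) := by
  set B := bernoulliPowerSeries A
  have hBE : B * (exp A - 1) = X := bernoulliPowerSeries_mul_exp_sub_one A
  have hB' : d⁄dX A B * (exp A - 1) + B * exp A = 1 := by
    simpa [Derivation.leibniz, derivative_exp, smul_eq_mul, add_comm, mul_comm]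
      using congrArg (d⁄dX A) hBE
  have hE : exp A - 1 ≠ (0 : A⟦X⟧) := fun h => by
    simpa [coeff_exp] using congrArg (coeff 1) h
  -- after multiplying by `(eˣ - 1)²` both sides equal `X²`
  refine mul_right_cancel₀ (pow_ne_zero 2 hE) ?_
  linear_combination (B * (exp A - 1) + X - (1 - X) * (exp A - 1) - X * exp A) * hBE
    + X * (exp A - 1) * hB'

theorem sum_choose_mul_bernoulli_mul_bernoulli (m : ℕ) :
    ∑ k ∈ range (m + 1), (m.choose k : ℚ) * bernoulli k * bernoulli (m - k)
      = (1 - m) * bernoulli m - m * bernoulli (m - 1) := by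
  have hcoeff := congrArg (coeff m) (bernoulliPowerSeries_mul_self ℚ)
  rw [coeff_mul, Nat.sum_antidiagonal_eq_sum_range_succ_mk] at hcoeff
  have hterm : ∀ k ∈ range (m + 1), (m.choose k : ℚ) * bernoulli k * bernoulli (m - k)
      = m ! * (bernoulli k / k ! * (bernoulli (m - k) / (m - k)!)) := fun k hk => by
    rw [Nat.cast_choose ℚ (Nat.lt_succ_iff.mp (mem_range.mp hk))]
    field_simp
  rw [sum_congr rfl hterm, ← mul_sum]
  cases m with
  | zero => simp
  | succ m =>
    simp only [bernoulliPowerSeries, coeff_mk, Algebra.algebraMap_self, RingHom.id_apply,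
      sub_mul, one_mul, map_sub, coeff_succ_X_mul, coeff_derivative] at hcoeff
    rw [hcoeff, Nat.factorial_succ]
    push_cast
    field_simp
    ring

theorem sum_range_two_mul_add_one_of_odd_eq_zero {M : Type*} [AddCommMonoid M] (f : ℕ → M)
    (hf : ∀ k, Odd k → f k = 0) (n : ℕ) :
    ∑ k ∈ range (2 * n + 1), f k = ∑ j ∈ range (n + 1), f (2 * j) := by
  induction n with
  | zero => simp
  | succ n ih =>
    rw [show 2 * (n + 1) + 1 = 2 * n + 1 + 1 + 1 by ring, sum_range_succ, sum_range_succ, ih,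
      hf (2 * n + 1) (odd_two_mul_add_one n), add_zero, sum_range_succ (n := n + 1), mul_add_one]

theorem euler_bernoulli_convolution (n : ℕ) (hn : 2 ≤ n) :
    ∑ j ∈ Finset.Icc 1 (n - 1),
        ((Nat.choose (2 * n) (2 * j) : ℚ)) * bernoulli (2 * j) * bernoulli (2 * n - 2 * j)
      = -(2 * n + 1 : ℚ) * bernoulli (2 * n) := by
  have hB : bernoulli (2 * n - 1) = 0 :=
    bernoulli_eq_zero_of_odd ⟨n - 1, by omega⟩ (by omega)
  have hodd : ∀ k, Odd k → bernoulli k * bernoulli (2 * n - k) = 0 := fun k hk => by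
    obtain rfl | hk1 := eq_or_ne k 1
    · rw [hB, mul_zero]
    · rw [bernoulli_eq_zero_of_odd hk (by obtain ⟨j, rfl⟩ := hk; omega), zero_mul]
  have hconv := sum_choose_mul_bernoulli_mul_bernoulli (2 * n)
  rw [sum_range_two_mul_add_one_of_odd_eq_zero _
      (fun k hk => by rw [mul_assoc, hodd k hk, mul_zero]),
    sum_range_succ, range_eq_Ico, sum_eq_sum_Ico_succ_bot (by omega), hB,
    show Ico (0 + 1) n = Icc 1 (n - 1) by ext; simp only [mem_Ico, mem_Icc]; omega] at hconv
  simp only [mul_zero, Nat.choose_zero_right, Nat.choose_self, Nat.sub_zero, Nat.sub_self,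
    bernoulli_zero] at hconv
  push_cast at hconv
  linear_combination hconv
end

section
/- For every positive integer n, the power sum symmetric function pₙ equals the alternating sum of Schur-hooks: pₙ = ∑_{i=0}^{n-1} (-1)^i s_{(n-i, 1^i)} (the Murnaghan–Nakayama rule for a cycle). -/
open scoped Classical

/-- The `n`-th complete homogeneous symmetric function in the variables `x₀, x₁, …`,
as a formal power series: the sum of all monomials of degree `n`. -/
noncomputable def hsym (n : ℕ) : MvPowerSeries ℕ ℚ :=
  fun d => if (d.sum fun _ k => k) = n then 1 else 0

/-- The `n`-th elementary symmetric function: the sum of all squarefree monomials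
of degree `n`. -/
noncomputable def esym (n : ℕ) : MvPowerSeries ℕ ℚ :=
  fun d => if (d.sum fun _ k => k) = n ∧ ∀ i, d i ≤ 1 then 1 else 0

/-- The `n`-th power sum symmetric function `∑ⱼ xⱼⁿ`. -/
noncomputable def psym (n : ℕ) : MvPowerSeries ℕ ℚ :=
  fun d => if ∃ j, d = Finsupp.single j n then 1 else 0

/-- `h` indexed by an integer, vanishing for negative indices. -/
noncomputable def hsymZ (k : ℤ) : MvPowerSeries ℕ ℚ :=
  if 0 ≤ k then hsym k.toNat else 0
/-- The Schur function of the hook `(a, 1^b)`, defined by the Jacobi–Trudi determinant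
`det (h_{λᵢ - i + j})` for the hook partition `λ = (a, 1, …, 1)` with `b` ones. -/
noncomputable def schurHook (a b : ℕ) : MvPowerSeries ℕ ℚ :=
  Matrix.det (fun i j : Fin (b + 1) =>
    hsymZ (((if (i : ℕ) = 0 then (a : ℤ) else 1) - (i : ℕ) + (j : ℕ))))

/-!
Expanding the Jacobi–Trudi determinant of a hook along its first column gives
`s_(a,1^(b+1)) = h_a s_(1,1^b) - s_(a+1,1^b)`. A monomial `x^d` of degree `a + b` involving `ℓ`
distinct variables occurs in `h_a e_b` with coefficient `C(ℓ, b)` (choose which variables go to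
`e_b`), so by induction on `b` and Pascal's rule it occurs in `s_(a,1^b)` with coefficient
`C(ℓ - 1, b)`; in particular `s_(1,1^b) = e_(b+1)`. In the alternating sum of hooks the
coefficient of a monomial of degree `n` is therefore `∑_{i<n} (-1)^i C(ℓ - 1, i)`, which is
`1` if `ℓ = 1`, i.e. if the monomial is some `x_j^n`, and `0` otherwise.
-/

open Finset MvPowerSeries

namespace Finsupp

variable {σ : Type*}

theorem card_support_le_degree (d : σ →₀ ℕ) : #d.support ≤ d.degree :=
  Finset.card_eq_sum_ones d.support ▸
    Finset.sum_le_sum fun _ hi => Nat.one_le_iff_ne_zero.2 (mem_support_iff.1 hi)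

theorem degree_eq_card_support {d : σ →₀ ℕ} (h : ∀ i, d i ≤ 1) : d.degree = #d.support := by
  rw [degree_apply, Finset.card_eq_sum_ones]
  exact Finset.sum_congr rfl fun i hi =>
    le_antisymm (h i) (Nat.one_le_iff_ne_zero.2 (mem_support_iff.1 hi))

theorem card_support_eq_one_iff_exists_single {d : σ →₀ ℕ} {n : ℕ} (hd : d.degree = n)
    (hn : n ≠ 0) : #d.support = 1 ↔ ∃ j, d = single j n := by
  rw [card_support_eq_one]
  constructor
  · rintro ⟨j, -, hj⟩
    rw [hj, degree_single] at hd
    exact ⟨j, hd ▸ hj⟩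
  · rintro ⟨j, rfl⟩
    exact ⟨j, by simpa using hn, by simp⟩

theorem one_le_card_support {d : σ →₀ ℕ} (hd : d.degree ≠ 0) : 1 ≤ #d.support :=
  Finset.card_pos.2 (support_nonempty_iff.2 fun h => hd (by simp [h]))

end Finsupp

namespace Multiset

variable {σ : Type*} [DecidableEq σ]

theorem toFinsupp_val_apply (S : Finset σ) (i : σ) : S.val.toFinsupp i = if i ∈ S then 1 else 0 :=
  count_eq_of_nodup S.nodup

theorem support_toFinsupp_val (S : Finset σ) : S.val.toFinsupp.support = S :=
  S.val_toFinset

theorem toFinsupp_val_support {d : σ →₀ ℕ} (h : ∀ i, d i ≤ 1) : d.support.val.toFinsupp = d := by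
  ext i
  have := h i
  simp only [toFinsupp_val_apply, Finsupp.mem_support_iff]
  split_ifs <;> omega

theorem toFinsupp_val_le_one (S : Finset σ) (i : σ) : S.val.toFinsupp i ≤ 1 := by
  rw [toFinsupp_val_apply]
  split_ifs <;> omega

theorem toFinsupp_val_le {d : σ →₀ ℕ} {S : Finset σ} (hS : S ⊆ d.support) : S.val.toFinsupp ≤ d :=
  fun i => by
  rw [toFinsupp_val_apply]
  split_ifs with hi
  · exact Nat.one_le_iff_ne_zero.2 (Finsupp.mem_support_iff.1 (hS hi))
  · exact Nat.zero_le _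

end Multiset

theorem Finsupp.card_antidiagonal_filter_squarefree {σ : Type*} [DecidableEq σ]
    (d : σ →₀ ℕ) (b : ℕ) :
    #{p ∈ antidiagonal d | p.2.degree = b ∧ ∀ i, p.2 i ≤ 1} = (#d.support).choose b := by
  rw [← card_powersetCard b d.support]
  refine card_nbij' (fun p => p.2.support) (fun S => (d - S.val.toFinsupp, S.val.toFinsupp))
    ?_ ?_ ?_ ?_
  · rintro ⟨p, q⟩ hpq
    simp only [coe_filter, HasAntidiagonal.mem_antidiagonal, Set.mem_ofPred_eq] at hpq
    obtain ⟨rfl, hb, hq⟩ := hpq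
    rw [mem_coe, mem_powersetCard, ← degree_eq_card_support hq, hb]
    exact ⟨support_mono le_add_self, rfl⟩
  · intro S hS
    rw [mem_coe, mem_powersetCard] at hS
    simp only [coe_filter, HasAntidiagonal.mem_antidiagonal, Set.mem_ofPred_eq]
    refine ⟨tsub_add_cancel_of_le (Multiset.toFinsupp_val_le hS.1), ?_,
      Multiset.toFinsupp_val_le_one S⟩
    rw [degree_eq_card_support (Multiset.toFinsupp_val_le_one S), Multiset.support_toFinsupp_val,
      hS.2]
  · rintro ⟨p, q⟩ hpq
    simp only [coe_filter, HasAntidiagonal.mem_antidiagonal, Set.mem_ofPred_eq] at hpq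
    obtain ⟨rfl, -, hq⟩ := hpq
    simp [Multiset.toFinsupp_val_support hq]
  · intro S _
    exact Multiset.support_toFinsupp_val S

theorem Nat.choose_pred_eq_choose_succ {m b : ℕ} (hm : 1 ≤ m) (hmb : m ≤ b + 1) :
    (m - 1).choose b = m.choose (b + 1) := by
  rcases hmb.eq_or_lt with rfl | hlt
  · simp
  · rw [Nat.choose_eq_zero_of_lt (by omega), Nat.choose_eq_zero_of_lt hlt]

theorem sum_range_neg_one_pow_mul_choose_of_lt {R : Type*} [Ring R] {M n : ℕ} (h : M < n) :
    ∑ i ∈ range n, (-1 : R) ^ i * M.choose i = if M = 0 then 1 else 0 := by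
  rw [← sum_subset (range_subset_range.2 h) fun i _ hi => by
    rw [Nat.choose_eq_zero_of_lt (by simpa using hi), Nat.cast_zero, mul_zero]]
  have := congrArg (Int.cast : ℤ → R) (Int.alternating_sum_range_choose (n := M))
  push_cast at this
  exact this

theorem coeff_hsym (d : ℕ →₀ ℕ) (a : ℕ) : coeff d (hsym a) = if d.degree = a then 1 else 0 := rfl

theorem coeff_esym (d : ℕ →₀ ℕ) (b : ℕ) :
    coeff d (esym b) = if d.degree = b ∧ ∀ i, d i ≤ 1 then 1 else 0 := rfl

theorem coeff_psym (d : ℕ →₀ ℕ) (n : ℕ) :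
    coeff d (psym n) = if ∃ j, d = Finsupp.single j n then 1 else 0 := rfl

theorem coeff_neg_one_pow_mul {σ R : Type*} [CommRing R] (d : σ →₀ ℕ) (i : ℕ)
    (f : MvPowerSeries σ R) : coeff d ((-1) ^ i * f) = (-1) ^ i * coeff d f := by
  rw [show (-1 : MvPowerSeries σ R) ^ i = C ((-1) ^ i) by simp, coeff_C_mul]

theorem hsym_zero : hsym 0 = 1 := by
  ext d
  simp only [coeff_hsym, coeff_one, Finsupp.degree_eq_zero_iff]

theorem hsymZ_natCast (a : ℕ) : hsymZ a = hsym a := by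
  simp [hsymZ]

theorem hsymZ_of_neg {k : ℤ} (hk : k < 0) : hsymZ k = 0 := by
  simp [hsymZ, hk.not_ge]

theorem coeff_hsym_mul_esym (d : ℕ →₀ ℕ) (a b : ℕ) :
    coeff d (hsym a * esym b) = if d.degree = a + b then ((#d.support).choose b : ℚ) else 0 := by
  have term : ∀ p ∈ antidiagonal d, coeff p.1 (hsym a) * coeff p.2 (esym b) =
      if d.degree = a + b ∧ (p.2.degree = b ∧ ∀ i, p.2 i ≤ 1) then 1 else 0 := by
    rintro ⟨p, q⟩ hpq
    rw [HasAntidiagonal.mem_antidiagonal] at hpq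
    rw [coeff_hsym, coeff_esym, ← hpq, map_add]
    split_ifs <;> grind
  rw [coeff_mul, sum_congr rfl term]
  split_ifs with hd
  · simp only [hd, true_and]
    rw [sum_boole, Finsupp.card_antidiagonal_filter_squarefree]
  · simp [hd]

noncomputable def hookMatrix (a b : ℕ) : Matrix (Fin (b + 1)) (Fin (b + 1)) (MvPowerSeries ℕ ℚ) :=
  Matrix.of fun i j => hsymZ ((if (i : ℕ) = 0 then (a : ℤ) else 1) - (i : ℕ) + (j : ℕ))

theorem schurHook_eq_det (a b : ℕ) : schurHook a b = (hookMatrix a b).det := rfl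

theorem hookMatrix_submatrix_succAbove_zero (a b : ℕ) :
    (hookMatrix a (b + 1)).submatrix (Fin.succAbove 0) Fin.succ = hookMatrix 1 b := by
  ext i j : 1
  simp only [hookMatrix, Matrix.submatrix_apply, Matrix.of_apply, Fin.zero_succAbove, Fin.val_succ,
    Nat.succ_ne_zero, if_false, Nat.cast_one, ite_self]
  congr 1
  push_cast
  ring

theorem hookMatrix_submatrix_succAbove_one (a b : ℕ) :
    (hookMatrix a (b + 1)).submatrix (Fin.succAbove 1) Fin.succ = hookMatrix (a + 1) b := by
  ext i j : 1
  cases i using Fin.cases <;>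
    simp only [hookMatrix, Matrix.submatrix_apply, Matrix.of_apply, Fin.one_succAbove_zero,
      Fin.one_succAbove_succ, Fin.val_succ, Fin.val_zero, Nat.succ_ne_zero, if_false, if_true] <;>
    congr 1 <;> push_cast <;> ring

theorem schurHook_zero (a : ℕ) : schurHook a 0 = hsym a := by
  simp [schurHook_eq_det, hookMatrix, hsymZ_natCast]

theorem schurHook_succ (a b : ℕ) :
    schurHook a (b + 1) = hsym a * schurHook 1 b - schurHook (a + 1) b := by
  have entry_zero : hookMatrix a (b + 1) 0 0 = hsym a := by simp [hookMatrix, hsymZ_natCast]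
  have entry_one : hookMatrix a (b + 1) 1 0 = 1 := by
    rw [← hsym_zero, ← hsymZ_natCast]
    simp [hookMatrix]
  rw [schurHook_eq_det, Matrix.det_succ_column_zero, Fin.sum_univ_succ, Fin.sum_univ_succ,
    Fin.succ_zero_eq_one, hookMatrix_submatrix_succAbove_zero, hookMatrix_submatrix_succAbove_one,
    sum_eq_zero fun i _ => ?_]
  · rw [entry_zero, entry_one, schurHook_eq_det, schurHook_eq_det]
    simp [sub_eq_add_neg]
  · rw [hookMatrix, Matrix.of_apply, hsymZ_of_neg, mul_zero, zero_mul]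
    simp only [Fin.val_succ, Fin.val_zero]
    omega

theorem coeff_schurHook (d : ℕ →₀ ℕ) (a b : ℕ) :
    coeff d (schurHook a b) = if d.degree = a + b then ((#d.support - 1).choose b : ℚ) else 0 := by
  induction b generalizing a d with
  | zero => simp [schurHook_zero, coeff_hsym]
  | succ b ih =>
    have schurHook_one : schurHook 1 b = esym (b + 1) := by
      ext e
      rw [ih, ← one_mul (esym _), ← hsym_zero, coeff_hsym_mul_esym, add_comm 1 b, zero_add]
      split_ifs with he
      · rw [Nat.choose_pred_eq_choose_succ (Finsupp.one_le_card_support (by omega))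
          (he ▸ Finsupp.card_support_le_degree e)]
      · rfl
    rw [schurHook_succ, map_sub, schurHook_one, coeff_hsym_mul_esym, ih,
      show a + 1 + b = a + (b + 1) by omega]
    split_ifs with hd
    · obtain ⟨m, hm⟩ : ∃ m, #d.support = m + 1 :=
        ⟨_, (Nat.sub_add_cancel (Finsupp.one_le_card_support (by omega))).symm⟩
      rw [hm, Nat.add_sub_cancel, Nat.choose_succ_succ', Nat.cast_add, add_sub_cancel_left]
    · rw [sub_zero]

theorem murnaghan_nakayama_cycle (n : ℕ) (hn : 0 < n) :
    psym n = ∑ i ∈ Finset.range n, (-1 : MvPowerSeries ℕ ℚ) ^ i * schurHook (n - i) i := by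
  ext d
  rw [coeff_psym, map_sum]
  simp only [coeff_neg_one_pow_mul, coeff_schurHook]
  rw [sum_congr rfl fun i hi => by rw [Nat.sub_add_cancel (mem_range.1 hi).le]]
  by_cases hd : d.degree = n
  · have hcard := Finsupp.one_le_card_support (hd ▸ hn.ne')
    have hsingle : #d.support - 1 = 0 ↔ ∃ j, d = Finsupp.single j n := by
      rw [← Finsupp.card_support_eq_one_iff_exists_single hd hn.ne']
      omega
    have hlt : #d.support - 1 < n := by
      have := Finsupp.card_support_le_degree d
      omega
    simp only [hd, if_true, sum_range_neg_one_pow_mul_choose_of_lt hlt, hsingle]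
  · have hne : ¬∃ j, d = Finsupp.single j n := by
      rintro ⟨j, rfl⟩
      simp at hd
    simp [hd, hne]
end

section
/- For every positive integer n, (2n+1) · B_{2n} = ∑_{0 ≤ j ≤ i ≤ n} C(2n+1, 2i-2j+1) · B_{2n-2i+2j} · (2^{1-2i+2j} - 2^{2-2n}). -/
/-!
The summand depends only on `m = n - i + j`, where it equals
`2^(1-2n) C(2n+1, 2m) (2^(2m) - 2) B_{2m}`, and each `m ≤ n` occurs `m + 1` times. Since
`(2^k - 2) B_k` vanishes for odd `k`, the weight `m + 1 = k/2 + 1` turns this into a sum over all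
`k ≤ 2n+1`, which the identity `k C(N+1, k) = (N+1) (C(N+1, k) - C(N, k))` reduces to the sums
`∑ C(N, k) (2^k - 2) B_k = -2^N B_N` for `N = 2n, 2n+1`. Those follow from the duplication formula
`∑ C(N, k) 2^k B_k = (2 - 2^N) B_N`, the coefficient form of `B(2x) (e^x + 1) = 2 B(x)` for the
generating function `B(x) = x / (e^x - 1)`.
-/

open Nat Finset PowerSeries

theorem factorial_mul_coeff_mk_mul_exp (a : ℕ → ℚ) (n : ℕ) :
    (n ! : ℚ) * coeff n (mk (fun k => a k / k !) * exp ℚ) =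
      ∑ k ∈ range (n + 1), n.choose k * a k := by
  rw [coeff_mul, Nat.sum_antidiagonal_eq_sum_range_succ_mk, mul_sum]
  refine sum_congr rfl fun k hk => ?_
  have hkn : k ≤ n := mem_range_succ_iff.mp hk
  rw [coeff_mk, coeff_exp, Nat.cast_choose ℚ hkn]
  simp [field]

theorem bernoulliPowerSeries_rescale_two_mul_exp_add_one :
    rescale (2 : ℚ) (bernoulliPowerSeries ℚ) * (exp ℚ + 1) =
      C (2 : ℚ) * bernoulliPowerSeries ℚ := by
  have hB := bernoulliPowerSeries_mul_exp_sub_one ℚ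
  have hexp : exp ℚ ^ 2 = rescale (2 : ℚ) (exp ℚ) :=
    mod_cast exp_pow_eq_rescale_exp (A := ℚ) 2
  have hne : (exp ℚ - 1 : ℚ⟦X⟧) ≠ 0 := fun h => by simpa using congrArg (coeff 1) h
  apply mul_right_cancel₀ hne
  calc rescale (2 : ℚ) (bernoulliPowerSeries ℚ) * (exp ℚ + 1) * (exp ℚ - 1)
      = rescale 2 (bernoulliPowerSeries ℚ * (exp ℚ - 1)) := by
        rw [map_mul, map_sub, map_one, ← hexp]; ring
    _ = C (2 : ℚ) * bernoulliPowerSeries ℚ * (exp ℚ - 1) := by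
        rw [hB, rescale_X, mul_assoc, hB]

theorem sum_choose_mul_two_pow_mul_bernoulli (n : ℕ) :
    ∑ k ∈ range (n + 1), (n.choose k : ℚ) * 2 ^ k * bernoulli k =
      (2 - 2 ^ n) * bernoulli n := by
  have hrescale :
      rescale (2 : ℚ) (bernoulliPowerSeries ℚ) = mk fun k => 2 ^ k * bernoulli k / k ! := by
    ext k; simp [bernoulliPowerSeries, coeff_rescale, mul_div_assoc]
  have h := congrArg (fun f => (n ! : ℚ) * coeff n f)
    bernoulliPowerSeries_rescale_two_mul_exp_add_one
  simp only [mul_add, mul_one, map_add, coeff_C_mul] at h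
  rw [hrescale, factorial_mul_coeff_mk_mul_exp] at h
  simp only [coeff_mk, bernoulliPowerSeries, Algebra.algebraMap_self, RingHom.id_apply] at h
  field_simp at h
  linear_combination h

theorem sum_choose_mul_two_pow_sub_two_mul_bernoulli {n : ℕ} (hn : n ≠ 1) :
    ∑ k ∈ range (n + 1), (n.choose k : ℚ) * ((2 ^ k - 2) * bernoulli k) =
      -2 ^ n * bernoulli n := by
  have hsum : ∑ k ∈ range (n + 1), (n.choose k : ℚ) * bernoulli k = bernoulli n := by
    simp [sum_range_succ, hn]
  simp only [mul_sub, sub_mul, sum_sub_distrib, ← mul_assoc]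
  rw [sum_choose_mul_two_pow_mul_bernoulli]
  simp_rw [mul_comm _ (2 : ℚ), mul_assoc, ← mul_sum, hsum]
  ring

theorem two_pow_sub_two_mul_bernoulli_of_odd {k : ℕ} (hk : Odd k) :
    ((2 : ℚ) ^ k - 2) * bernoulli k = 0 := by
  rcases (Nat.one_le_iff_ne_zero.mpr hk.pos.ne').eq_or_lt with rfl | hlt
  · norm_num
  · rw [bernoulli_eq_zero_of_odd hk hlt, mul_zero]

theorem sum_range_mul_choose_succ {R : Type*} [CommRing R] (n : ℕ) (g : ℕ → R) :
    ∑ k ∈ range (n + 2), k * ((n + 1).choose k : R) * g k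
      = (n + 1) * (∑ k ∈ range (n + 2), ((n + 1).choose k : R) * g k
          - ∑ k ∈ range (n + 1), (n.choose k : R) * g k) := by
  have hext : ∑ k ∈ range (n + 1), (n.choose k : R) * g k
      = ∑ k ∈ range (n + 2), (n.choose k : R) * g k := by
    simp [sum_range_succ _ (n + 1)]
  rw [hext, ← sum_sub_distrib, mul_sum]
  refine sum_congr rfl fun k hk => ?_
  have hkn : k ≤ n + 1 := mem_range_succ_iff.mp hk
  have h := congrArg (Nat.cast : ℕ → R) (choose_mul_succ_eq n k)
  push_cast [hkn] at h
  linear_combination g k * h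

theorem sum_range_two_mul_of_odd_eq_zero {M : Type*} [AddCommMonoid M] (n : ℕ) {h : ℕ → M}
    (hodd : ∀ m, h (2 * m + 1) = 0) :
    ∑ k ∈ range (2 * n), h k = ∑ m ∈ range n, h (2 * m) := by
  induction n with
  | zero => simp
  | succ n ih =>
    rw [mul_add_one, sum_range_succ, sum_range_succ, ih, hodd, add_zero, sum_range_succ]

theorem sum_range_sum_range_add_tsub {M : Type*} [AddCommMonoid M] (n : ℕ) (g : ℕ → M) :
    ∑ i ∈ range (n + 1), ∑ j ∈ range (i + 1), g (n - i + j) =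
      ∑ m ∈ range (n + 1), (m + 1) • g m := by
  calc ∑ i ∈ range (n + 1), ∑ j ∈ range (i + 1), g (n - i + j)
      = ∑ i ∈ range (n + 1), ∑ m ∈ Ico (n - i) (n + 1), g m := by
        refine sum_congr rfl fun i hi => ?_
        rw [sum_Ico_eq_sum_range, show n + 1 - (n - i) = i + 1 by have := mem_range.mp hi; omega]
    _ = ∑ i ∈ Ico 0 (n + 1), ∑ m ∈ Ico i (n + 1), g m := by
        rw [← sum_range_reflect, range_eq_Ico, add_tsub_cancel_right]
        refine sum_congr rfl fun i hi => ?_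
        rw [show n - (n - i) = i by have := (mem_Ico.mp hi).2; omega]
    _ = ∑ m ∈ range (n + 1), (m + 1) • g m := by
        rw [sum_Ico_Ico_comm, range_eq_Ico]
        simp

theorem sum_succ_smul_choose_two_mul_mul_bernoulli {n : ℕ} (hn : 0 < n) :
    ∑ m ∈ range (n + 1),
        (m + 1) • ((2 * n + 1).choose (2 * m) * ((2 ^ (2 * m) - 2) * bernoulli (2 * m)))
      = (2 * n + 1) * 2 ^ (2 * n) * bernoulli (2 * n) / 2 := by
  set f : ℕ → ℚ := fun k => (2 * n + 1).choose k * ((2 ^ k - 2) * bernoulli k)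
  have hodd : ∀ m, ((2 * m + 1 : ℕ) / 2 + 1 : ℚ) * f (2 * m + 1) = 0 := fun m => by
    simp only [f, two_pow_sub_two_mul_bernoulli_of_odd (odd_two_mul_add_one m), mul_zero]
  have hS₁ : ∑ k ∈ range (2 * n + 2), f k = 0 := by
    rw [sum_choose_mul_two_pow_sub_two_mul_bernoulli (by omega),
      bernoulli_eq_zero_of_odd (odd_two_mul_add_one n) (by omega), mul_zero]
  have hS₀ : ∑ k ∈ range (2 * n + 1), ((2 * n).choose k : ℚ) * ((2 ^ k - 2) * bernoulli k)
      = -2 ^ (2 * n) * bernoulli (2 * n) := sum_choose_mul_two_pow_sub_two_mul_bernoulli (by omega)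
  calc ∑ m ∈ range (n + 1), (m + 1) • f (2 * m)
      = ∑ k ∈ range (2 * (n + 1)), ((k : ℚ) / 2 + 1) * f k := by
        rw [sum_range_two_mul_of_odd_eq_zero _ hodd]
        refine sum_congr rfl fun m _ => ?_
        rw [nsmul_eq_mul]; push_cast; ring
    _ = (∑ k ∈ range (2 * n + 2),
            k * ((2 * n + 1).choose k : ℚ) * ((2 ^ k - 2) * bernoulli k)) / 2
          + ∑ k ∈ range (2 * n + 2), f k := by
        rw [sum_div, ← sum_add_distrib]
        exact sum_congr rfl fun k _ => by ring
    _ = (2 * n + 1) * 2 ^ (2 * n) * bernoulli (2 * n) / 2 := by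
        rw [sum_range_mul_choose_succ, hS₁, hS₀]
        push_cast; ring

theorem choose_mul_bernoulli_mul_zpow_sub_zpow {n i j : ℕ} (hji : j ≤ i) (hin : i ≤ n) :
    ((2 * n + 1).choose (2 * i - 2 * j + 1) : ℚ) * bernoulli (2 * n - 2 * i + 2 * j) *
        ((2 : ℚ) ^ ((1 : ℤ) - 2 * i + 2 * j) - (2 : ℚ) ^ ((2 : ℤ) - 2 * n))
      = 2 ^ ((1 : ℤ) - 2 * n) * ((2 * n + 1).choose (2 * (n - i + j))
          * ((2 ^ (2 * (n - i + j)) - 2) * bernoulli (2 * (n - i + j)))) := by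
  set k := n - i + j
  have hchoose : 2 * i - 2 * j + 1 = 2 * n + 1 - 2 * k := by omega
  have hbern : 2 * n - 2 * i + 2 * j = 2 * k := by omega
  have hexp₁ : (1 : ℤ) - 2 * i + 2 * j = (2 * k : ℕ) + (1 - 2 * n) := by omega
  have hexp₂ : (2 : ℤ) - 2 * n = 1 + (1 - 2 * n) := by ring
  rw [hchoose, hbern, hexp₁, hexp₂, choose_symm (by omega), zpow_add₀ two_ne_zero,
    zpow_add₀ two_ne_zero, zpow_natCast, zpow_one]
  ring

theorem bernoulli_double_sum (n : ℕ) (hn : 0 < n) :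
    (2 * n + 1 : ℚ) * bernoulli (2 * n) =
      ∑ i ∈ Finset.range (n + 1), ∑ j ∈ Finset.range (i + 1),
        ((Nat.choose (2 * n + 1) (2 * i - 2 * j + 1) : ℚ)) *
          bernoulli (2 * n - 2 * i + 2 * j) *
          ((2 : ℚ) ^ ((1 : ℤ) - 2 * i + 2 * j) - (2 : ℚ) ^ ((2 : ℤ) - 2 * n)) := by
  have hpow : (2 : ℚ) ^ ((1 : ℤ) - 2 * n) * 2 ^ (2 * n) = 2 := by
    rw [← zpow_natCast, ← zpow_add₀ two_ne_zero]; norm_num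
  symm
  calc _ = 2 ^ ((1 : ℤ) - 2 * n) * ∑ i ∈ range (n + 1), ∑ j ∈ range (i + 1),
          ((2 * n + 1).choose (2 * (n - i + j))
            * ((2 ^ (2 * (n - i + j)) - 2) * bernoulli (2 * (n - i + j))) : ℚ) := by
        simp_rw [mul_sum]
        refine sum_congr rfl fun i hi => sum_congr rfl fun j hj => ?_
        exact choose_mul_bernoulli_mul_zpow_sub_zpow (mem_range_succ_iff.mp hj)
          (mem_range_succ_iff.mp hi)
    _ = 2 ^ ((1 : ℤ) - 2 * n) * ((2 * n + 1) * 2 ^ (2 * n) * bernoulli (2 * n) / 2) := by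
        rw [sum_range_sum_range_add_tsub n (fun m => ((2 * n + 1).choose (2 * m)
          * ((2 ^ (2 * m) - 2) * bernoulli (2 * m)) : ℚ)),
          sum_succ_smul_choose_two_mul_mul_bernoulli hn]
    _ = _ := by linear_combination (2 * n + 1) * bernoulli (2 * n) / 2 * hpow
end
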